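/- The subgroup of SL₂(ℤ) generated by A = [[1,4],[0,1]] and B = [[0,1],[-1,0]] has infinite index in SL₂(ℤ). -/

import Mathlib

/-!
The subgroup `⟨T ^ n, S⟩` (for `3 ≤ |n|`) moves `∞ ∈ ℙ¹(ℚ)` only to `∞` and to backward continued
fractions `n k₁ - 1/(n k₂ - 1/(⋯))` whose tails have absolute value at least `2`: this set is
stable under `x ↦ x + n` and, because such a fraction of absolute value `< 2` must have `k₁ = 0`,
under `x ↦ -1/x`. Every such fraction lies within `1/2` of `nℤ`, so misses `[1, 2]`. The cat map
`[[2, 1], [1, 1]]` preserves the cone of vectors of slope in `[1, 2]` and sends `∞` into it, so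
none of its positive powers lies in the subgroup, whereas a subgroup of finite index contains a
positive power of every element.
-/

def A13 : Matrix.SpecialLinearGroup (Fin 2) ℤ := ⟨!![1, 4; 0, 1], by decide⟩
def B13 : Matrix.SpecialLinearGroup (Fin 2) ℤ := ⟨!![0, 1; -1, 0], by decide⟩

open ModularGroup MatrixGroups MulAction Subgroup
open scoped Pointwise

lemma eq_zero_or_three_le_abs_mul {n : ℤ} (hn : 3 ≤ |n|) (k : ℤ) :
    (n * k : ℚ) = 0 ∨ 3 ≤ |(n * k : ℚ)| := by
  rcases eq_or_ne k 0 with rfl | hk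
  · simp
  · right
    have : (3 : ℤ) ≤ |n * k| := by
      rw [abs_mul]
      nlinarith [Int.one_le_abs hk]
    exact_mod_cast this

lemma abs_inv_le_half {y : ℚ} (hy : 2 ≤ |y|) : |y⁻¹| ≤ 1 / 2 := by
  rw [abs_inv, one_div]
  exact inv_anti₀ (by norm_num) hy

/-- `x = n k₁ - 1/(n k₂ - 1/(⋯ - 1/(n kᵣ)))` with all the tails after the first of absolute
value at least `2`: a backward continued fraction with all partial quotients in `nℤ`. -/
inductive BackwardCF (n : ℤ) : ℚ → Prop
  | base (k : ℤ) : BackwardCF n (n * k)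
  | step (k : ℤ) {y : ℚ} : BackwardCF n y → 2 ≤ |y| → BackwardCF n (n * k - y⁻¹)

namespace BackwardCF

variable {n : ℤ} {x : ℚ}

lemma zero : BackwardCF n 0 := by
  simpa using base (n := n) 0

lemma add_mul (h : BackwardCF n x) (j : ℤ) : BackwardCF n (x + n * j) := by
  cases h with
  | base k => simpa [mul_add] using base (n := n) (k + j)
  | step k hy hy2 =>
    convert step (k + j) hy hy2 using 1
    push_cast
    ring

lemma add_iff : BackwardCF n (x + n) ↔ BackwardCF n x :=
  ⟨fun h ↦ by simpa using h.add_mul (-1), fun h ↦ by simpa using h.add_mul 1⟩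

lemma exists_abs_sub_le (h : BackwardCF n x) : ∃ k : ℤ, |x - n * k| ≤ 1 / 2 := by
  cases h with
  | base k => exact ⟨k, by simp⟩
  | step k _ hy2 =>
    refine ⟨k, ?_⟩
    rw [sub_sub_cancel_left, abs_neg]
    exact abs_inv_le_half hy2

lemma neg_inv (hn : 3 ≤ |n|) (h : BackwardCF n x) (hx : x ≠ 0) : BackwardCF n (-x⁻¹) := by
  rcases le_or_gt 2 |x| with hx2 | hx2
  · simpa using step 0 h hx2
  cases h with
  | base k =>
    rcases eq_zero_or_three_le_abs_mul hn k with hk | hk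
    · exact absurd hk hx
    · linarith
  | @step k y hy hy2 =>
    have hyinv := abs_inv_le_half hy2
    have hk : (n * k : ℚ) = 0 := by
      refine (eq_zero_or_three_le_abs_mul hn k).resolve_right fun hk ↦ ?_
      have := abs_sub_abs_le_abs_sub (n * k : ℚ) y⁻¹
      linarith
    simpa [hk] using hy

lemma neg_inv_iff (hn : 3 ≤ |n|) (hx : x ≠ 0) : BackwardCF n (-x⁻¹) ↔ BackwardCF n x :=
  ⟨fun h ↦ by simpa using h.neg_inv hn (by simpa using hx), fun h ↦ h.neg_inv hn hx⟩

lemma not_of_mem_Icc (hn : 3 ≤ |n|) (hx : x ∈ Set.Icc 1 2) : ¬ BackwardCF n x := fun h ↦ by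
  obtain ⟨k, hk⟩ := h.exists_abs_sub_le
  obtain ⟨hx1, hx2⟩ := hx
  rw [abs_le] at hk
  rcases eq_zero_or_three_le_abs_mul hn k with hk' | hk'
  · linarith
  · rcases abs_cases (n * k : ℚ) with ⟨h, _⟩ | ⟨h, _⟩ <;> linarith

end BackwardCF

/-- The column vectors whose slope `v 0 / v 1`, as a point of `ℙ¹(ℚ)`, is `∞` or a
`BackwardCF n`. -/
def backwardCFVectors (n : ℤ) : Set (Fin 2 → ℤ) :=
  {v | v 1 = 0 ∨ BackwardCF n (v 0 / v 1)}

lemma T_zpow_mem_stabilizer_backwardCFVectors (n : ℤ) :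
    T ^ n ∈ stabilizer SL(2, ℤ) (backwardCFVectors n) := by
  refine mem_stabilizer_set.2 fun v ↦ ?_
  have hv : T ^ n • v = ![v 0 + n * v 1, v 1] := by
    ext i
    fin_cases i <;> simp [Matrix.SpecialLinearGroup.smul_def, coe_T_zpow, Matrix.mulVec_eq_sum,
      mul_comm]
  rcases eq_or_ne (v 1) 0 with hv1 | hv1
  · simp [backwardCFVectors, hv, hv1]
  · have hslope : ((v 0 : ℚ) + n * v 1) / v 1 = v 0 / v 1 + n := by
      field_simp
    simp [backwardCFVectors, hv, hv1, hslope, BackwardCF.add_iff]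

lemma S_mem_stabilizer_backwardCFVectors {n : ℤ} (hn : 3 ≤ |n|) :
    S ∈ stabilizer SL(2, ℤ) (backwardCFVectors n) := by
  refine mem_stabilizer_set.2 fun v ↦ ?_
  have hv : S • v = ![-v 1, v 0] := by
    ext i
    fin_cases i <;> simp [Matrix.SpecialLinearGroup.smul_def, Matrix.mulVec_eq_sum]
  rcases eq_or_ne (v 0) 0 with hv0 | hv0
  · simp [backwardCFVectors, hv, hv0, BackwardCF.zero]
  rcases eq_or_ne (v 1) 0 with hv1 | hv1
  · simp [backwardCFVectors, hv, hv1, BackwardCF.zero]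
  have hne : (v 0 / v 1 : ℚ) ≠ 0 := by simp [hv0, hv1]
  simp only [backwardCFVectors, Set.mem_ofPred_eq, hv, Matrix.cons_val_zero, Matrix.cons_val_one,
    Matrix.cons_val_fin_one, hv0, hv1, false_or, Int.cast_neg]
  rw [neg_div, ← inv_div, BackwardCF.neg_inv_iff hn hne]

def catMap : SL(2, ℤ) := ⟨!![2, 1; 1, 1], by decide⟩

def slopeOneTwoCone : Set (Fin 2 → ℤ) := {v | 0 < v 1 ∧ v 1 ≤ v 0 ∧ v 0 ≤ 2 * v 1}

lemma catMap_smul_mem_slopeOneTwoCone {v : Fin 2 → ℤ} (hv : v ∈ slopeOneTwoCone) :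
    catMap • v ∈ slopeOneTwoCone := by
  obtain ⟨h1, h2, h3⟩ := hv
  simp only [slopeOneTwoCone, Set.mem_ofPred_eq, Matrix.SpecialLinearGroup.smul_def,
    Matrix.smul_eq_mulVec, Matrix.mulVec_eq_sum]
  simp [catMap]
  omega

lemma catMap_pow_succ_smul_mem_slopeOneTwoCone (m : ℕ) :
    catMap ^ (m + 1) • ![1, 0] ∈ slopeOneTwoCone := by
  induction m with
  | zero =>
    simp only [zero_add, pow_one, slopeOneTwoCone, Set.mem_ofPred_eq,
      Matrix.SpecialLinearGroup.smul_def, Matrix.smul_eq_mulVec, Matrix.mulVec_eq_sum]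
    simp [catMap]
  | succ m ih => rw [pow_succ', mul_smul]; exact catMap_smul_mem_slopeOneTwoCone ih

lemma disjoint_slopeOneTwoCone_backwardCFVectors {n : ℤ} (hn : 3 ≤ |n|) :
    Disjoint slopeOneTwoCone (backwardCFVectors n) := by
  refine Set.disjoint_left.2 fun v ⟨hv1, hv10, hv01⟩ hv ↦ ?_
  have hv1q : (0 : ℚ) < v 1 := by exact_mod_cast hv1
  refine hv.elim hv1.ne' (BackwardCF.not_of_mem_Icc hn ⟨?_, ?_⟩)
  · rw [le_div_iff₀ hv1q, one_mul]; exact_mod_cast hv10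
  · rw [div_le_iff₀ hv1q]; exact_mod_cast hv01

theorem index_eq_zero_of_le_stabilizer_backwardCFVectors {n : ℤ} (hn : 3 ≤ |n|)
    {H : Subgroup SL(2, ℤ)} (hH : H ≤ stabilizer SL(2, ℤ) (backwardCFVectors n)) :
    H.index = 0 := by
  by_contra hne
  obtain ⟨m, hm, -, hmem⟩ := H.exists_pow_mem_of_index_ne_zero hne catMap
  obtain ⟨m, rfl⟩ := Nat.exists_eq_succ_of_ne_zero hm.ne'
  have hinf : ![1, 0] ∈ backwardCFVectors n := Or.inl rfl
  exact (disjoint_slopeOneTwoCone_backwardCFVectors hn).ne_of_mem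
    (catMap_pow_succ_smul_mem_slopeOneTwoCone m) ((mem_stabilizer_set.1 (hH hmem) _).2 hinf) rfl

theorem stmt_13 :
    (Subgroup.closure ({A13, B13} : Set (Matrix.SpecialLinearGroup (Fin 2) ℤ))).index = 0 := by
  have hA : A13 = T ^ (4 : ℤ) := Subtype.ext (by rw [coe_T_zpow]; rfl)
  have hB : B13 = S⁻¹ := by decide
  refine index_eq_zero_of_le_stabilizer_backwardCFVectors (n := 4) (by norm_num : (3 : ℤ) ≤ |4|)
    ((closure_le _).2 ?_)
  rintro g (rfl | rfl)
  · rw [hA]; exact T_zpow_mem_stabilizer_backwardCFVectors 4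
  · rw [hB]; exact inv_mem (S_mem_stabilizer_backwardCFVectors (by norm_num))
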